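/- arXiv:1509.02485 — 3 statements merged into one kernel-verified Lean document; each statement's English description precedes it below -/
import Mathlib

section
/- Let G = (V,E) be a finite simple graph and ≺ a linear order on V. Then COL≺(G) = STAB(R≺(G)), i.e., the convex hull in ℝ^A of the representative vectors of all proper colorings of G equals the convex hull of the characteristic vectors of the independent sets of the Cornaz–Jost graph R≺(G). -/
open scoped Classical

/-- `(u, v)` is an arc of `G` w.r.t. the order `lt`: `u ≺ v` and `uv ∉ E`. -/
abbrev IsArcPair {V : Type*} (G : SimpleGraph V) (lt : V → V → Prop) (p : V × V) : Prop :=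
  lt p.1 p.2 ∧ ¬ G.Adj p.1 p.2

/-- The set of arcs of `G` (ordered non-edges), as a type. -/
abbrev Arc {V : Type*} (G : SimpleGraph V) (lt : V → V → Prop) : Type _ :=
  {p : V × V // IsArcPair G lt p}

/-- A proper coloring of a graph, as a color function. -/
def ProperColoring {W : Type*} (H : SimpleGraph W) (c : W → ℕ) : Prop :=
  ∀ u v, H.Adj u v → c u ≠ c v

/-- `u` is the `lt`-least element of its color class under `c`. -/
def IsClassRep {V : Type*} (lt : V → V → Prop) (c : V → ℕ) (u : V) : Prop :=
  ∀ w, c w = c u → u = w ∨ lt u w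

/-- The representative vector of a coloring `c`: `x (u,v) = 1` iff `u` and `v` have the
same color and `u` is the `lt`-least element of that color class. -/
noncomputable def repVec {V : Type*} (G : SimpleGraph V) (lt : V → V → Prop) (c : V → ℕ) :
    Arc G lt → ℝ := fun a =>
  if c a.1.1 = c a.1.2 ∧ IsClassRep lt c a.1.1 then 1 else 0

/-- The coloring polytope: convex hull of representative vectors of proper colorings. -/
noncomputable def COL {V : Type*} (G : SimpleGraph V) (lt : V → V → Prop) :
    Set (Arc G lt → ℝ) :=
  convexHull ℝ {x | ∃ c : V → ℕ, ProperColoring G c ∧ x = repVec G lt c}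

/-- A stable (independent) set of a graph. -/
def IsStableSet {W : Type*} (H : SimpleGraph W) (s : Set W) : Prop :=
  ∀ a ∈ s, ∀ b ∈ s, ¬ H.Adj a b

/-- The stable set polytope of a graph. -/
noncomputable def STAB {W : Type*} (H : SimpleGraph W) : Set (W → ℝ) :=
  convexHull ℝ {x | ∃ s : Set W, IsStableSet H s ∧ x = s.indicator 1}

/-- The Cornaz–Jost graph `R≺(G)`: vertices are the arcs of `G`; two distinct arcs
`(a,b)` and `(c,d)` are adjacent iff they share an endpoint and it is not the case that
`a = c` and `bd ∉ E`. -/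
def RGraph {V : Type*} (G : SimpleGraph V) (lt : V → V → Prop) : SimpleGraph (Arc G lt) where
  Adj p q := p ≠ q ∧
    (p.1.1 = q.1.1 ∨ p.1.1 = q.1.2 ∨ p.1.2 = q.1.1 ∨ p.1.2 = q.1.2) ∧
    ¬ (p.1.1 = q.1.1 ∧ ¬ G.Adj p.1.2 q.1.2)
  symm := by
    constructor
    rintro p q ⟨h1, h2, h3⟩
    refine ⟨h1.symm, ?_, fun hc => h3 ⟨hc.1.symm, fun h => hc.2 h.symm⟩⟩
    rcases h2 with h | h | h | h
    · exact Or.inl h.symm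
    · exact Or.inr (Or.inr (Or.inl h.symm))
    · exact Or.inr (Or.inl h.symm)
    · exact Or.inr (Or.inr (Or.inr h.symm))
  loopless := ⟨fun p h => h.1 rfl⟩

/-- The line graph of the complement of `G`, with the edges of the complement
identified with the arcs of `G`: two distinct arcs are adjacent iff they share an endpoint. -/
def lineGraphArc {V : Type*} (G : SimpleGraph V) (lt : V → V → Prop) :
    SimpleGraph (Arc G lt) where
  Adj p q := p ≠ q ∧
    (p.1.1 = q.1.1 ∨ p.1.1 = q.1.2 ∨ p.1.2 = q.1.1 ∨ p.1.2 = q.1.2)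
  symm := by
    constructor
    rintro p q ⟨h1, h2⟩
    refine ⟨h1.symm, ?_⟩
    rcases h2 with h | h | h | h
    · exact Or.inl h.symm
    · exact Or.inr (Or.inr (Or.inl h.symm))
    · exact Or.inr (Or.inl h.symm)
    · exact Or.inr (Or.inr (Or.inr h.symm))
  loopless := ⟨fun p h => h.1 rfl⟩

/-- The independence number of `H` is at most 2. -/
def AlphaLeTwo {W : Type*} (H : SimpleGraph W) : Prop :=
  ∀ s : Set W, IsStableSet H s → s.ncard ≤ 2

/-- The chromatic number of a graph, as a natural number. -/
noncomputable def chromNum {W : Type*} (H : SimpleGraph W) : ℕ :=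
  sInf {n : ℕ | ∃ c : W → ℕ, ProperColoring H c ∧ ∀ v, c v < n}

/-- `H` contains a copy of `F` as a (not necessarily induced) subgraph. -/
def ContainsCopy {α β : Type*} (F : SimpleGraph α) (H : SimpleGraph β) : Prop :=
  ∃ f : α → β, Function.Injective f ∧ ∀ a b, F.Adj a b → H.Adj (f a) (f b)

/-- `H` contains an induced copy of `F`. -/
def ContainsInducedCopy {α β : Type*} (F : SimpleGraph α) (H : SimpleGraph β) : Prop :=
  ∃ f : α → β, Function.Injective f ∧ ∀ a b, H.Adj (f a) (f b) ↔ F.Adj a b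

/-- The paw: a triangle `{0,1,2}` plus the vertex `3` adjacent only to `2`. -/
def pawGraph : SimpleGraph (Fin 4) :=
  SimpleGraph.fromEdgeSet {s(0, 1), s(0, 2), s(1, 2), s(2, 3)}

/-- The kite: the paw plus the vertex `4` adjacent only to `3` (the paw's degree-1 vertex). -/
def kiteGraph : SimpleGraph (Fin 5) :=
  SimpleGraph.fromEdgeSet {s(0, 1), s(0, 2), s(1, 2), s(2, 3), s(3, 4)}

/-- The claw `K_{1,3}`: vertex `0` adjacent to `1`, `2`, `3`. -/
def clawGraph : SimpleGraph (Fin 4) :=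
  SimpleGraph.fromEdgeSet {s(0, 1), s(0, 2), s(0, 3)}

/-- A graph is claw-free if it has no induced copy of `K_{1,3}`. -/
def ClawFree {W : Type*} (H : SimpleGraph W) : Prop :=
  ¬ ContainsInducedCopy clawGraph H

/-- A graph is quasi-line if the neighborhood of every vertex can be partitioned
into two cliques. -/
def QuasiLine {W : Type*} (H : SimpleGraph W) : Prop :=
  ∀ v : W, ∃ K₁ K₂ : Set W, Disjoint K₁ K₂ ∧ K₁ ∪ K₂ = {w | H.Adj v w} ∧
    H.IsClique K₁ ∧ H.IsClique K₂

/-- A graph is hypomatchable if deleting any vertex leaves a graph with a perfect matching. -/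
def Hypomatchable {W : Type*} (H : SimpleGraph W) : Prop :=
  ∀ u : W, ∃ M : (H.induce {v | v ≠ u}).Subgraph, M.IsPerfectMatching

/-- A graph is 2-connected: connected, at least 3 vertices, and deleting any vertex
leaves it connected. -/
def TwoConnected {W : Type*} [Fintype W] (H : SimpleGraph W) : Prop :=
  H.Connected ∧ 3 ≤ Fintype.card W ∧ ∀ u : W, (H.induce {v | v ≠ u}).Connected

/-- A set of arcs is a matching of the complement of `G`: no two distinct arcs share
an endpoint. -/
def IsMatchingArcSet {V : Type*} (G : SimpleGraph V) (lt : V → V → Prop)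
    (m : Set (Arc G lt)) : Prop :=
  ∀ p ∈ m, ∀ q ∈ m, p ≠ q →
    ¬ (p.1.1 = q.1.1 ∨ p.1.1 = q.1.2 ∨ p.1.2 = q.1.1 ∨ p.1.2 = q.1.2)

/-- The matching polytope of the complement of `G`, viewed in `ℝ^A` via the
identification of edges of the complement with arcs. -/
noncomputable def MATCHarcs {V : Type*} (G : SimpleGraph V) (lt : V → V → Prop) :
    Set (Arc G lt → ℝ) :=
  convexHull ℝ {x | ∃ m : Set (Arc G lt), IsMatchingArcSet G lt m ∧ x = m.indicator 1}

/-- Restriction of a vector indexed by arcs of `G` to the arcs of an induced subgraph. -/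
def restrictVec {V : Type*} (G : SimpleGraph V) (lt : V → V → Prop) (W : Set V)
    (x : Arc G lt → ℝ) : Arc (G.induce W) (fun a b => lt ↑a ↑b) → ℝ :=
  fun a => x ⟨(↑a.1.1, ↑a.1.2), a.2.1, a.2.2⟩

/-!
Both polytopes are convex hulls of the same set of 0/1 vectors. Two arcs of a stable set `s` of
`R≺(G)` that share an endpoint must share their tail and have non-adjacent heads, so `s` is a
disjoint union of stars `u → v₁, …, vₖ` whose centre `u` is `≺`-below its leaves and never a leaf
itself. Colouring each star with its own colour, and every other vertex alone, is proper and has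
`s` as its set of representative arcs; conversely the representative arcs of a proper coloring
form such a union of stars.
-/

namespace CornazJost

variable {V : Type*} {G : SimpleGraph V} {lt : V → V → Prop}

variable (G lt) in
def repSet (c : V → ℕ) : Set (Arc G lt) :=
  {a | c a.1.1 = c a.1.2 ∧ IsClassRep lt c a.1.1}

variable (G lt) in
theorem repVec_eq_indicator (c : V → ℕ) : repVec G lt c = (repSet G lt c).indicator 1 := by
  funext a
  by_cases h : a ∈ repSet G lt c
  · rw [Set.indicator_of_mem h]
    exact if_pos h
  · rw [Set.indicator_of_notMem h]
    exact if_neg h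

theorem isStableSet_repSet [IsStrictOrder V lt] {c : V → ℕ} (hc : ProperColoring G c) :
    IsStableSet (RGraph G lt) (repSet G lt c) := by
  rintro p ⟨hp, hp_rep⟩ q ⟨hq, hq_rep⟩ ⟨-, hshare, hnot⟩
  by_cases htail : p.1.1 = q.1.1
  · exact hnot ⟨htail, fun hadj => hc _ _ hadj (hp.symm.trans (htail ▸ hq))⟩
  · have hcol : c p.1.1 ≠ c q.1.1 := fun h => by
      rcases hp_rep q.1.1 h.symm with h₁ | h₁
      · exact htail h₁
      rcases hq_rep p.1.1 h with h₂ | h₂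
      · exact htail h₂.symm
      exact asymm h₁ h₂
    rcases hshare with h | h | h | h
    · exact htail h
    · exact hcol (h ▸ hq.symm)
    · exact hcol (hp.trans (congrArg c h))
    · exact hcol (hp.trans (h ▸ hq.symm))

variable {s : Set (Arc G lt)}

theorem tail_eq_of_mem_stable (hs : IsStableSet (RGraph G lt) s) {p q : Arc G lt}
    (hp : p ∈ s) (hq : q ∈ s) (hne : p ≠ q)
    (hshare : p.1.1 = q.1.1 ∨ p.1.1 = q.1.2 ∨ p.1.2 = q.1.1 ∨ p.1.2 = q.1.2) :
    p.1.1 = q.1.1 ∧ ¬ G.Adj p.1.2 q.1.2 :=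
  not_not.mp fun h => hs p hp q hq ⟨hne, hshare, h⟩

theorem eq_of_head_eq (hs : IsStableSet (RGraph G lt) s) {p q : Arc G lt}
    (hp : p ∈ s) (hq : q ∈ s) (h : p.1.2 = q.1.2) : p = q := by
  by_contra hne
  exact hne (Subtype.ext (Prod.ext
    (tail_eq_of_mem_stable hs hp hq hne (Or.inr (Or.inr (Or.inr h)))).1 h))

theorem head_ne_tail [IsStrictOrder V lt] (hs : IsStableSet (RGraph G lt) s) {p q : Arc G lt}
    (hp : p ∈ s) (hq : q ∈ s) : p.1.2 ≠ q.1.1 := by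
  intro h
  have htail : p.1.1 = q.1.1 := by
    by_cases hpq : p = q
    · rw [hpq]
    · exact (tail_eq_of_mem_stable hs hp hq hpq (Or.inr (Or.inr (Or.inl h)))).1
  exact irrefl _ (htail.trans h.symm ▸ p.2.1 : lt p.1.2 p.1.2)

variable (s) in
/-- The centre of the star of `s` containing `v`: the tail of the arc of `s` with head `v`,
if there is one, and `v` itself otherwise. -/
noncomputable def root (v : V) : V :=
  if h : ∃ a ∈ s, a.1.2 = v then h.choose.1.1 else v

variable (s) in
theorem root_eq_self_or_exists (v : V) :
    root s v = v ∨ ∃ a ∈ s, a.1.1 = root s v ∧ a.1.2 = v := by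
  unfold root
  split_ifs with h
  · exact Or.inr ⟨h.choose, h.choose_spec.1, rfl, h.choose_spec.2⟩
  · exact Or.inl rfl

theorem root_head (hs : IsStableSet (RGraph G lt) s) {a : Arc G lt} (ha : a ∈ s) :
    root s a.1.2 = a.1.1 := by
  have h : ∃ b ∈ s, b.1.2 = a.1.2 := ⟨a, ha, rfl⟩
  rw [root, dif_pos h, eq_of_head_eq hs h.choose_spec.1 ha h.choose_spec.2]

theorem root_tail [IsStrictOrder V lt] (hs : IsStableSet (RGraph G lt) s) {a : Arc G lt}
    (ha : a ∈ s) : root s a.1.1 = a.1.1 := by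
  have h : ¬ ∃ b ∈ s, b.1.2 = a.1.1 := fun ⟨b, hb, hba⟩ => head_ne_tail hs hb ha hba
  rw [root, dif_neg h]

theorem properColoring_comp_root (hs : IsStableSet (RGraph G lt) s) {f : V → ℕ}
    (hf : f.Injective) : ProperColoring G (f ∘ root s) := by
  intro u v hadj hcol
  have hroot : root s u = root s v := hf hcol
  rcases root_eq_self_or_exists s u with hu | ⟨a, ha, ha₁, ha₂⟩ <;>
    rcases root_eq_self_or_exists s v with hv | ⟨b, hb, hb₁, hb₂⟩
  · exact G.ne_of_adj hadj (hu.symm.trans (hroot.trans hv))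
  · exact b.2.2 (hb₂ ▸ hb₁ ▸ hroot ▸ hu.symm ▸ hadj)
  · exact a.2.2 (ha₂ ▸ ha₁ ▸ hroot ▸ hv.symm ▸ hadj.symm)
  · have hab : a ≠ b := by
      rintro rfl
      exact G.ne_of_adj hadj (ha₂.symm.trans hb₂)
    exact (tail_eq_of_mem_stable hs ha hb hab
      (Or.inl (ha₁.trans (hroot.trans hb₁.symm)))).2 (ha₂ ▸ hb₂ ▸ hadj)

theorem repSet_comp_root [IsStrictOrder V lt] (hs : IsStableSet (RGraph G lt) s)
    {f : V → ℕ} (hf : f.Injective) : repSet G lt (f ∘ root s) = s := by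
  ext a
  simp only [repSet, IsClassRep, Function.comp_apply, hf.eq_iff]
  constructor
  · rintro ⟨hcol, hrep⟩
    have htail : root s a.1.1 = a.1.1 := by
      rcases root_eq_self_or_exists s a.1.1 with h | ⟨b, hb, hb₁, hb₂⟩
      · exact h
      rcases hrep b.1.1 ((root_tail hs hb).trans hb₁) with h | h
      · exact absurd (hb₂ ▸ h ▸ b.2.1) (irrefl _)
      · exact absurd (hb₂ ▸ b.2.1) (asymm h)
    rcases root_eq_self_or_exists s a.1.2 with h | ⟨b, hb, hb₁, hb₂⟩
    · exact absurd (h ▸ hcol ▸ htail ▸ a.2.1) (irrefl _)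
    · have hab : a = b :=
        Subtype.ext (Prod.ext (hb₁.trans (hcol.symm.trans htail)).symm hb₂.symm)
      rwa [hab]
  · intro ha
    refine ⟨(root_tail hs ha).trans (root_head hs ha).symm, fun w hw => ?_⟩
    rw [root_tail hs ha] at hw
    rcases root_eq_self_or_exists s w with h | ⟨b, hb, hb₁, hb₂⟩
    · exact Or.inl (hw.symm.trans h)
    · exact Or.inr (hb₂ ▸ hw ▸ hb₁ ▸ b.2.1)

theorem exists_properColoring_repSet_eq [IsStrictOrder V lt] [Countable V]
    (hs : IsStableSet (RGraph G lt) s) :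
    ∃ c : V → ℕ, ProperColoring G c ∧ repSet G lt c = s := by
  obtain ⟨f, hf⟩ := Countable.exists_injective_nat V
  exact ⟨f ∘ root s, properColoring_comp_root hs hf, repSet_comp_root hs hf⟩

end CornazJost

theorem statement1_general {V : Type*} [Fintype V]
    (G : SimpleGraph V)
    (lt : V → V → Prop) (hlt : IsStrictTotalOrder V lt) :
    COL G lt = STAB (RGraph G lt) := by
  refine congrArg (convexHull ℝ) (Set.ext fun x => ⟨?_, ?_⟩)
  · rintro ⟨c, hc, rfl⟩
    exact ⟨_, CornazJost.isStableSet_repSet hc, CornazJost.repVec_eq_indicator G lt c⟩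
  · rintro ⟨s, hs, rfl⟩
    obtain ⟨c, hc, rfl⟩ := CornazJost.exists_properColoring_repSet_eq hs
    exact ⟨c, hc, (CornazJost.repVec_eq_indicator G lt c).symm⟩

/-- `COL≺(G) = STAB(R≺(G))`. -/
theorem statement1 {V : Type*} [Fintype V] [DecidableEq V]
    (G : SimpleGraph V) [DecidableRel G.Adj]
    (lt : V → V → Prop) [DecidableRel lt] (hlt : IsStrictTotalOrder V lt) :
    COL G lt = STAB (RGraph G lt) :=
  statement1_general G lt hlt
end

section
/- Let G = (V,E) be a finite simple graph whose vertex set is partitioned as V = V₁ ∪ V₂ with every vertex of V₁ adjacent to every vertex of V₂ (so G is the complete join of G₁ = G[V₁] and G₂ = G[V₂]), and let ≺ be a linear order on V with restrictions ≺₁ and ≺₂ to V₁ and V₂. Then every arc of G has both endpoints in V₁ or both in V₂, and under the resulting identification ℝ^A ≅ ℝ^{A₁} × ℝ^{A₂} one has COL≺(G) = COL≺₁(G₁) × COL≺₂(G₂). -/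
open scoped Classical

/-! Every colour class of a proper colouring of the join lies inside `V₁` or inside `V₂`, so the
representative vector of such a colouring is the pair of the representative vectors of its
restrictions; conversely two colourings of `G₁` and `G₂` with disjoint palettes (even and odd
colours) glue to one of `G`. Hence the restriction map `ℝ^A → ℝ^{A₁} × ℝ^{A₂}`, which is linear
and injective because every arc lies within one side, maps the vertex set of `COL≺(G)` onto the
product of the vertex sets, and linear maps commute with convex hulls. -/

section ComplementaryJoin

variable {V : Type*}

def colorVecs (G : SimpleGraph V) (lt : V → V → Prop) : Set (Arc G lt → ℝ) :=
  {x | ∃ c : V → ℕ, ProperColoring G c ∧ x = repVec G lt c}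

lemma COL_eq_convexHull_colorVecs (G : SimpleGraph V) (lt : V → V → Prop) :
    COL G lt = convexHull ℝ (colorVecs G lt) := rfl

lemma repVec_comp_of_injective (G : SimpleGraph V) (lt : V → V → Prop) (c : V → ℕ)
    {f : ℕ → ℕ} (hf : Function.Injective f) : repVec G lt (f ∘ c) = repVec G lt c := by
  funext a
  exact if_congr (by simp only [IsClassRep, Function.comp_apply, hf.eq_iff]) rfl rfl

section Coloring

variable {G : SimpleGraph V} {c : V → ℕ}

lemma ProperColoring.induce (hc : ProperColoring G c) (W : Set V) :
    ProperColoring (G.induce W) (fun v : W => c v) :=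
  fun u v huv => hc u v huv

lemma ProperColoring.mem_of_color_eq (hc : ProperColoring G c) {W : Set V}
    (hW : ∀ u ∈ W, ∀ w ∉ W, G.Adj u w) {u w : V} (hu : u ∈ W) (hcw : c w = c u) : w ∈ W := by
  by_contra hw
  exact hc u w (hW u hu w hw) hcw.symm

lemma isClassRep_subtype_iff (lt : V → V → Prop) (c : V → ℕ) {W : Set V} {u : W}
    (hW : ∀ w, c w = c u → w ∈ W) :
    IsClassRep (fun a b : W => lt a b) (fun v : W => c v) u ↔ IsClassRep lt c u := by
  refine ⟨fun h w hw => ?_, fun h w hw => ?_⟩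
  · simpa only [Subtype.ext_iff] using h ⟨w, hW w hw⟩ hw
  · simpa only [Subtype.ext_iff] using h w hw

lemma restrictVec_repVec (lt : V → V → Prop) {W : Set V}
    (hW : ∀ u ∈ W, ∀ w, c w = c u → w ∈ W) :
    restrictVec G lt W (repVec G lt c)
      = repVec (G.induce W) (fun a b => lt a b) (fun v : W => c v) := by
  funext a
  simp only [restrictVec, repVec, isClassRep_subtype_iff lt c (hW _ a.1.1.2)]

lemma ProperColoring.restrictVec_repVec (hc : ProperColoring G c) (lt : V → V → Prop)
    {W : Set V} (hW : ∀ u ∈ W, ∀ w ∉ W, G.Adj u w) :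
    restrictVec G lt W (repVec G lt c)
      = repVec (G.induce W) (fun a b => lt a b) (fun v : W => c v) :=
  _root_.restrictVec_repVec lt fun _ hu _ => hc.mem_of_color_eq hW hu

end Coloring

section Join

variable {G : SimpleGraph V} (lt : V → V → Prop) {V₁ V₂ : Set V}

lemma Arc.mem_or_mem_of_join (hunion : V₁ ∪ V₂ = Set.univ)
    (hjoin : ∀ a ∈ V₁, ∀ b ∈ V₂, G.Adj a b) (a : Arc G lt) :
    (a.1.1 ∈ V₁ ∧ a.1.2 ∈ V₁) ∨ (a.1.1 ∈ V₂ ∧ a.1.2 ∈ V₂) := by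
  have hmem : V₁ᶜ ⊆ V₂ := Set.compl_subset_iff_union.2 hunion
  by_cases h₁ : a.1.1 ∈ V₁ <;> by_cases h₂ : a.1.2 ∈ V₁
  · exact .inl ⟨h₁, h₂⟩
  · exact absurd (hjoin _ h₁ _ (hmem h₂)) a.2.2
  · exact absurd (hjoin _ h₂ _ (hmem h₁)).symm a.2.2
  · exact .inr ⟨hmem h₁, hmem h₂⟩

variable (G V₁ V₂) in
/-- The identification `ℝ^A → ℝ^{A₁} × ℝ^{A₂}`. -/
def restrictVecProd :
    (Arc G lt → ℝ) →ₗ[ℝ]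
      (Arc (G.induce V₁) (fun a b : V₁ => lt a b) → ℝ) ×
        (Arc (G.induce V₂) (fun a b : V₂ => lt a b) → ℝ) where
  toFun x := (restrictVec G lt V₁ x, restrictVec G lt V₂ x)
  map_add' _ _ := rfl
  map_smul' _ _ := rfl

lemma restrictVecProd_apply (x : Arc G lt → ℝ) :
    restrictVecProd G lt V₁ V₂ x = (restrictVec G lt V₁ x, restrictVec G lt V₂ x) := rfl

lemma restrictVecProd_injective
    (h : ∀ a : Arc G lt, (a.1.1 ∈ V₁ ∧ a.1.2 ∈ V₁) ∨ (a.1.1 ∈ V₂ ∧ a.1.2 ∈ V₂)) :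
    Function.Injective (restrictVecProd G lt V₁ V₂) := by
  intro x y hxy
  funext a
  rcases h a with ⟨hu, hv⟩ | ⟨hu, hv⟩
  · exact congrFun (congrArg Prod.fst hxy) ⟨(⟨_, hu⟩, ⟨_, hv⟩), a.2⟩
  · exact congrFun (congrArg Prod.snd hxy) ⟨(⟨_, hu⟩, ⟨_, hv⟩), a.2⟩

variable (V₁ V₂) in
noncomputable def joinColoring (c₁ : V₁ → ℕ) (c₂ : V₂ → ℕ) (v : V) : ℕ :=
  if h : v ∈ V₁ then 2 * c₁ ⟨v, h⟩ else if h' : v ∈ V₂ then 2 * c₂ ⟨v, h'⟩ + 1 else 0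

lemma joinColoring_left (c₁ : V₁ → ℕ) (c₂ : V₂ → ℕ) :
    (fun v : V₁ => joinColoring V₁ V₂ c₁ c₂ v) = (2 * ·) ∘ c₁ := by
  funext v
  simp [joinColoring, v.2]

lemma joinColoring_right (hdisj : Disjoint V₁ V₂) (c₁ : V₁ → ℕ) (c₂ : V₂ → ℕ) :
    (fun v : V₂ => joinColoring V₁ V₂ c₁ c₂ v) = (2 * · + 1) ∘ c₂ := by
  funext v
  simp [joinColoring, v.2, hdisj.notMem_of_mem_right v.2]

lemma ProperColoring.joinColoring (hunion : V₁ ∪ V₂ = Set.univ) {c₁ : V₁ → ℕ} {c₂ : V₂ → ℕ}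
    (hc₁ : ProperColoring (G.induce V₁) c₁) (hc₂ : ProperColoring (G.induce V₂) c₂) :
    ProperColoring G (joinColoring V₁ V₂ c₁ c₂) := by
  intro u v huv
  have hmem : V₁ᶜ ⊆ V₂ := Set.compl_subset_iff_union.2 hunion
  by_cases hu : u ∈ V₁ <;> by_cases hv : v ∈ V₁
  · have := hc₁ ⟨u, hu⟩ ⟨v, hv⟩ huv
    simp only [_root_.joinColoring, hu, hv, dite_true]
    omega
  · simp only [_root_.joinColoring, hu, hv, hmem hv, dite_true, dite_false]
    omega
  · simp only [_root_.joinColoring, hu, hv, hmem hu, dite_true, dite_false]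
    omega
  · have := hc₂ ⟨u, hmem hu⟩ ⟨v, hmem hv⟩ huv
    simp only [_root_.joinColoring, hu, hv, hmem hu, hmem hv, dite_true, dite_false]
    omega

lemma image_restrictVecProd_colorVecs (hdisj : Disjoint V₁ V₂) (hunion : V₁ ∪ V₂ = Set.univ)
    (hjoin : ∀ a ∈ V₁, ∀ b ∈ V₂, G.Adj a b) :
    restrictVecProd G lt V₁ V₂ '' colorVecs G lt =
      colorVecs (G.induce V₁) (fun a b => lt a b) ×ˢ
        colorVecs (G.induce V₂) (fun a b => lt a b) := by
  have hmem : V₁ᶜ ⊆ V₂ := Set.compl_subset_iff_union.2 hunion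
  have hjoin₁ : ∀ u ∈ V₁, ∀ w ∉ V₁, G.Adj u w := fun u hu w hw => hjoin u hu w (hmem hw)
  have hjoin₂ : ∀ u ∈ V₂, ∀ w ∉ V₂, G.Adj u w := fun u hu w hw =>
    (hjoin w (by_contra fun h => hw (hmem h)) u hu).symm
  ext ⟨y₁, y₂⟩
  constructor
  · rintro ⟨_, ⟨c, hc, rfl⟩, hy⟩
    rw [restrictVecProd_apply, Prod.mk.injEq] at hy
    refine ⟨⟨_, hc.induce V₁, ?_⟩, ⟨_, hc.induce V₂, ?_⟩⟩
    · rw [← hy.1, hc.restrictVec_repVec lt hjoin₁]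
    · rw [← hy.2, hc.restrictVec_repVec lt hjoin₂]
  · rintro ⟨⟨c₁, hc₁, rfl⟩, ⟨c₂, hc₂, rfl⟩⟩
    have hc := hc₁.joinColoring hunion hc₂
    refine ⟨_, ⟨_, hc, rfl⟩, ?_⟩
    rw [restrictVecProd_apply, Prod.mk.injEq]
    constructor
    · rw [hc.restrictVec_repVec lt hjoin₁, joinColoring_left,
        repVec_comp_of_injective _ _ c₁ (mul_right_injective₀ two_ne_zero)]
    · rw [hc.restrictVec_repVec lt hjoin₂, joinColoring_right hdisj]
      exact repVec_comp_of_injective _ _ c₂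
        ((add_left_injective 1).comp (mul_right_injective₀ two_ne_zero))

end Join

end ComplementaryJoin

theorem statement12_general {V : Type*}
    (G : SimpleGraph V)
    (lt : V → V → Prop)
    (V₁ V₂ : Set V) (hdisj : Disjoint V₁ V₂) (hunion : V₁ ∪ V₂ = Set.univ)
    (hjoin : ∀ a ∈ V₁, ∀ b ∈ V₂, G.Adj a b) :
    (∀ a : Arc G lt, (a.1.1 ∈ V₁ ∧ a.1.2 ∈ V₁) ∨ (a.1.1 ∈ V₂ ∧ a.1.2 ∈ V₂)) ∧
    (∀ x : Arc G lt → ℝ,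
      x ∈ COL G lt ↔
        restrictVec G lt V₁ x ∈ COL (G.induce V₁) (fun a b => lt ↑a ↑b) ∧
        restrictVec G lt V₂ x ∈ COL (G.induce V₂) (fun a b => lt ↑a ↑b)) := by
  have harc := Arc.mem_or_mem_of_join lt hunion hjoin
  refine ⟨harc, fun x => ?_⟩
  rw [← (restrictVecProd_injective lt harc).mem_set_image, COL_eq_convexHull_colorVecs,
    LinearMap.image_convexHull, image_restrictVecProd_colorVecs lt hdisj hunion hjoin,
    convexHull_prod]
  rfl

/-- if `G` is the complete join of `G[V₁]` and `G[V₂]`, then every arc of `G`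
lies within `V₁` or within `V₂`, and `COL≺(G) = COL≺₁(G₁) × COL≺₂(G₂)` under the resulting
identification. -/
theorem statement12 {V : Type*} [Fintype V] [DecidableEq V]
    (G : SimpleGraph V) [DecidableRel G.Adj]
    (lt : V → V → Prop) [DecidableRel lt] (hlt : IsStrictTotalOrder V lt)
    (V₁ V₂ : Set V) (hdisj : Disjoint V₁ V₂) (hunion : V₁ ∪ V₂ = Set.univ)
    (hjoin : ∀ a ∈ V₁, ∀ b ∈ V₂, G.Adj a b) :
    (∀ a : Arc G lt, (a.1.1 ∈ V₁ ∧ a.1.2 ∈ V₁) ∨ (a.1.1 ∈ V₂ ∧ a.1.2 ∈ V₂)) ∧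
    (∀ x : Arc G lt → ℝ,
      x ∈ COL G lt ↔
        restrictVec G lt V₁ x ∈ COL (G.induce V₁) (fun a b => lt ↑a ↑b) ∧
        restrictVec G lt V₂ x ∈ COL (G.induce V₂) (fun a b => lt ↑a ↑b)) :=
  statement12_general G lt V₁ V₂ hdisj hunion hjoin
end

section
/- Let G = (V,E) be a finite simple graph whose complement contains no paw as a subgraph. Then there exist pairwise disjoint subsets S₁, …, S_k of V, each an independent set of G of size 3, and V' = V ∖ (S₁ ∪ … ∪ S_k) with α(G[V']) ≤ 2, such that any two vertices lying in different parts of the partition {S₁, …, S_k, V'} are adjacent in G; that is, G is the complete join of the independent triples S₁, …, S_k and the subgraph G[V']. -/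
open scoped Classical

/-!
If the complement `H = Gᶜ` has no paw, every triangle of `H` is a connected component of `H`:
a triangle vertex with a neighbour outside the triangle would complete a paw. Hence the
triangles of `H` are pairwise disjoint and each is joined in `G` to every other vertex. They
are the stable triples `Sᵢ`, and the remaining vertices contain no triangle of `H`, i.e. no
stable set of size 3 in `G`.
-/

namespace SimpleGraph

variable {V : Type*}

lemma containsCopy_paw_of_triangle_adj {H : SimpleGraph V} {a b c d : V}
    (hab : H.Adj a b) (hac : H.Adj a c) (hbc : H.Adj b c) (hcd : H.Adj c d)
    (hda : d ≠ a) (hdb : d ≠ b) : ContainsCopy pawGraph H := by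
  have hdc : d ≠ c := hcd.ne.symm
  refine ⟨![a, b, c, d], ?_, ?_⟩
  · intro x y hxy
    fin_cases x <;> fin_cases y <;>
      simp_all [hab.ne, hac.ne, hbc.ne, hab.ne.symm, hac.ne.symm, hbc.ne.symm, eq_comm]
  · intro x y hxy
    fin_cases x <;> fin_cases y <;>
      simp_all [pawGraph, Sym2.eq, Sym2.rel_iff', hab.symm, hac.symm, hbc.symm, hcd.symm]

lemma mem_of_isNClique_three_of_adj {H : SimpleGraph V} (hH : ¬ ContainsCopy pawGraph H)
    {s : Finset V} (hs : H.IsNClique 3 s) {v d : V} (hv : v ∈ s) (hvd : H.Adj v d) :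
    d ∈ s := by
  obtain ⟨a, b, c, hab, hac, hbc, rfl⟩ := is3Clique_iff.mp hs
  by_contra hd
  simp only [Finset.mem_insert, Finset.mem_singleton, not_or] at hv hd
  obtain ⟨hda, hdb, hdc⟩ := hd
  rcases hv with rfl | rfl | rfl
  · exact hH (containsCopy_paw_of_triangle_adj hbc hab.symm hac.symm hvd hdb hdc)
  · exact hH (containsCopy_paw_of_triangle_adj hac hab hbc.symm hvd hda hdc)
  · exact hH (containsCopy_paw_of_triangle_adj hab hac hbc hvd hda hdb)

lemma eq_of_isNClique_three_of_mem {H : SimpleGraph V} (hH : ¬ ContainsCopy pawGraph H)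
    {s t : Finset V} (hs : H.IsNClique 3 s) (ht : H.IsNClique 3 t) {v : V} (hvs : v ∈ s)
    (hvt : v ∈ t) : s = t := by
  have hts : t ⊆ s := fun w hw =>
    if hvw : v = w then hvw ▸ hvs
    else mem_of_isNClique_three_of_adj hH hs hvs (ht.isClique hvt hw hvw)
  exact (Finset.eq_of_subset_of_card_le hts (by rw [hs.card_eq, ht.card_eq])).symm

lemma adj_of_mem_isNClique_three_compl {G : SimpleGraph V} (hG : ¬ ContainsCopy pawGraph Gᶜ)
    {s : Finset V} (hs : Gᶜ.IsNClique 3 s) {a b : V} (ha : a ∈ s) (hb : b ∉ s) :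
    G.Adj a b := by
  by_contra hab
  have hne : a ≠ b := fun h => hb (h ▸ ha)
  exact hb (mem_of_isNClique_three_of_adj hG hs ha ((compl_adj G a b).mpr ⟨hne, hab⟩))

lemma exists_isNClique_three_compl_subset {G : SimpleGraph V} {s : Set V}
    (hs : IsStableSet G s) (h : 2 < s.ncard) :
    ∃ t : Finset V, ↑t ⊆ s ∧ Gᶜ.IsNClique 3 t := by
  obtain ⟨u, hus, hu⟩ := Set.exists_subset_card_eq h
  obtain ⟨x, y, z, hxy, hxz, hyz, rfl⟩ := Set.ncard_eq_three.mp hu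
  have hxs : x ∈ s := hus (by simp)
  have hys : y ∈ s := hus (by simp)
  have hzs : z ∈ s := hus (by simp)
  refine ⟨{x, y, z}, by simpa using hus, is3Clique_iff.mpr ⟨x, y, z, ?_, ?_, ?_, rfl⟩⟩
  · exact (compl_adj G x y).mpr ⟨hxy, hs x hxs y hys⟩
  · exact (compl_adj G x z).mpr ⟨hxz, hs x hxs z hzs⟩
  · exact (compl_adj G y z).mpr ⟨hyz, hs y hys z hzs⟩

end SimpleGraph

theorem statement13_general {V : Type*} [Fintype V]
    (G : SimpleGraph V)
    (hpaw : ¬ ContainsCopy pawGraph Gᶜ) :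
    ∃ (k : ℕ) (S : Fin k → Finset V),
      (∀ i j, i ≠ j → Disjoint (S i) (S j)) ∧
      (∀ i, (S i).card = 3) ∧
      (∀ i, ∀ a ∈ S i, ∀ b ∈ S i, ¬ G.Adj a b) ∧
      (∀ s : Set V, s ⊆ {v | ∀ i, v ∉ S i} → IsStableSet G s → s.ncard ≤ 2) ∧
      (∀ i j, i ≠ j → ∀ a ∈ S i, ∀ b ∈ S j, G.Adj a b) ∧
      (∀ i, ∀ a ∈ S i, ∀ b : V, (∀ j, b ∉ S j) → G.Adj a b) := by
  set T := Gᶜ.cliqueFinset 3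
  set S : Fin T.card → Finset V := fun i => T.equivFin.symm i
  have hS : ∀ i, Gᶜ.IsNClique 3 (S i) := fun i =>
    SimpleGraph.mem_cliqueFinset_iff.mp (T.equivFin.symm i).2
  have hdisj : ∀ i j, i ≠ j → Disjoint (S i) (S j) := fun i j hij =>
    Finset.disjoint_left.mpr fun v hvi hvj =>
      hij (T.equivFin.symm.injective (Subtype.ext
        (SimpleGraph.eq_of_isNClique_three_of_mem hpaw (hS i) (hS j) hvi hvj)))
  refine ⟨T.card, S, hdisj, fun i => (hS i).card_eq, ?_, ?_, ?_, ?_⟩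
  · exact fun i a ha b hb hab => ((hS i).isClique ha hb hab.ne).2 hab
  · intro s hsub hs
    by_contra! h
    obtain ⟨t, hts, ht⟩ := SimpleGraph.exists_isNClique_three_compl_subset hs h
    obtain ⟨x, hx⟩ : t.Nonempty := Finset.card_pos.mp (by simp [ht.card_eq])
    refine hsub (hts hx) (T.equivFin ⟨t, SimpleGraph.mem_cliqueFinset_iff.mpr ht⟩) ?_
    simpa [S] using hx
  · exact fun i j hij a ha b hb =>
      SimpleGraph.adj_of_mem_isNClique_three_compl hpaw (hS i) ha
        (Finset.disjoint_right.mp (hdisj i j hij) hb)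
  · exact fun i a ha b hb =>
      SimpleGraph.adj_of_mem_isNClique_three_compl hpaw (hS i) ha (hb i)

/-- a graph whose complement has no paw subgraph is the complete join of
disjoint stable triples and a subgraph with independence number at most 2. -/
theorem statement13 {V : Type*} [Fintype V] [DecidableEq V]
    (G : SimpleGraph V) [DecidableRel G.Adj]
    (hpaw : ¬ ContainsCopy pawGraph Gᶜ) :
    ∃ (k : ℕ) (S : Fin k → Finset V),
      (∀ i j, i ≠ j → Disjoint (S i) (S j)) ∧
      (∀ i, (S i).card = 3) ∧
      (∀ i, ∀ a ∈ S i, ∀ b ∈ S i, ¬ G.Adj a b) ∧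
      (∀ s : Set V, s ⊆ {v | ∀ i, v ∉ S i} → IsStableSet G s → s.ncard ≤ 2) ∧
      (∀ i j, i ≠ j → ∀ a ∈ S i, ∀ b ∈ S j, G.Adj a b) ∧
      (∀ i, ∀ a ∈ S i, ∀ b : V, (∀ j, b ∉ S j) → G.Adj a b) :=
  statement13_general G hpaw
end
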